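/- Every r-dimensional circular Hidden Markov Model can be simulated by an r²-dimensional circular Hidden Quantum Markov Model. Precisely: let A_t ∈ Matrix (Fin r) (Fin r) ℝ be column-stochastic transition matrices and C_t ∈ Matrix (Fin d) (Fin r) ℝ be column-stochastic emission matrices of a c-HMM with joint distribution p(o₁,…,o_N) = Σ_{x : Fin N → Fin r} (A_1(x_1, x_N) · Π_{t=2}^N A_t(x_t, x_{t-1})) · Π_{t=1}^N C_t(o_t, x_t). Then there exist Kraus ranks μ_t and Kraus operators K_{t,o,w} ∈ Matrix (Fin (r*r)) (Fin (r*r)) ℂ satisfying Σ_{o,w} K_{t,o,w}ᴴ K_{t,o,w} = 1 for each t, such that for every observation sequence (o₁,…,o_N): p(o₁,…,o_N) = trace((Σ_w conj(K_{N,o_N,w}) ⊗ₖ K_{N,o_N,w}) ⬝ ⋯ ⬝ (Σ_w conj(K_{1,o_1,w}) ⊗ₖ K_{1,o_1,w})). -/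

import Mathlib

/-!
The c-HMM probability of `o` is the trace of the cyclic product of the observable operators
`M_t = diag (C_t (o_t, ·)) A_t`. Realise hidden state `i` as the basis vector `(i, i)` of `ℂ^{r²}`,
and let the Kraus operator `K_{t,o,w}` send the basis vector `w`, read as hidden state `j = fst w`,
to `∑ i, √(C_t (o, i) A_t (i, j)) |(i, i)⟩`; column stochasticity of `A_t` and `C_t` is exactly the
completeness relation. The transfer matrix `S_t = ∑_w conj K ⊗ K` only sees its inputs on the
diagonal `{(w, w)}` and through `fst w`, so `S_t = S_t U V` and `V S_t U = M_t`, where `V U = 1`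
for the embedding `U` of `ℂ^r` onto the diagonal and its left inverse `V`. Inserting `U V` between
the factors of `S_N ⋯ S_1` and rotating the trace gives `tr (S_N ⋯ S_1) = tr (M_N ⋯ M_1)`.
-/

open Matrix Kronecker BigOperators

/-- Ordered product `M (N-1) * ⋯ * M 1 * M 0` of a finite family of square matrices. -/
noncomputable def mprod {n : Type*} [Fintype n] [DecidableEq n] {N : ℕ}
    (M : Fin N → Matrix n n ℂ) : Matrix n n ℂ :=
  ((List.ofFn M).reverse).prod

theorem Fin.cons_last_init_apply {α : Type*} {N : ℕ} (y : Fin (N + 1) → α) (t : Fin (N + 1)) :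
    (Fin.cons (y (Fin.last N)) (Fin.init y) : Fin (N + 1) → α) t = y (t - 1) := by
  cases t using Fin.cases with
  | zero => rw [Fin.cons_zero, zero_sub, ← eq_neg_of_add_eq_zero_left (Fin.last_add_one N)]
  | succ s => rw [Fin.cons_succ, sub_eq_of_eq_add (Fin.coeSucc_eq_succ).symm, Fin.init]

theorem Function.LeftInverse.sum_ite_eq {m n β : Type*} [Fintype m] [Fintype n] [DecidableEq n]
    [AddCommMonoid β] {ι : m → n} {π : n → m} (h : Function.LeftInverse π ι) (f : m → β) :
    ∑ I, (if ι (π I) = I then f (π I) else 0) = ∑ i, f i := by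
  rw [← Finset.sum_filter]
  exact Finset.sum_nbij' π ι (by simp) (by simp [h _]) (by simp_all) (by simp [h _]) (by simp)

theorem Complex.ofReal_sqrt_mul_self {x : ℝ} (hx : 0 ≤ x) : (√x : ℂ) * √x = x := by
  rw [← ofReal_mul, Real.mul_self_sqrt hx]

section PathSum

variable {n : Type*} [Fintype n] [DecidableEq n]

theorem mprod_succ {N : ℕ} (M : Fin (N + 1) → Matrix n n ℂ) :
    mprod M = mprod (fun t => M t.succ) * M 0 := by
  simp [mprod, List.ofFn_succ]

theorem mprod_castSucc {N : ℕ} (M : Fin (N + 1) → Matrix n n ℂ) :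
    mprod M = M (Fin.last N) * mprod (fun t => M t.castSucc) := by
  rw [mprod, List.ofFn_succ', List.concat_eq_append, List.reverse_append, List.prod_append]
  simp [mprod]

theorem mprod_apply {N : ℕ} (M : Fin (N + 1) → Matrix n n ℂ) (a b : n) :
    mprod M a b = ∑ x : Fin N → n, ∏ t : Fin (N + 1),
      M t ((Fin.snoc x a : Fin (N + 1) → n) t) ((Fin.cons b x : Fin (N + 1) → n) t) := by
  induction N generalizing a with
  | zero => simp [mprod, Fin.snoc]
  | succ N ih =>
    rw [mprod_castSucc, mul_apply, ← (Fin.snocEquiv fun _ => n).sum_comp, Fintype.sum_prod_type]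
    refine Finset.sum_congr rfl fun c _ => ?_
    have hs : ∀ y : Fin N → n, (Fin.snocEquiv fun _ => n) (c, y) = Fin.snoc y c := fun _ => rfl
    simp [ih, Finset.mul_sum, Fin.prod_univ_castSucc, hs, Fin.cons_snoc_eq_snoc_cons, mul_comm]

theorem trace_mprod {N : ℕ} [NeZero N] (M : Fin N → Matrix n n ℂ) :
    (mprod M).trace = ∑ x : Fin N → n, ∏ t : Fin N, M t (x t) (x (t - 1)) := by
  obtain ⟨N, rfl⟩ := Nat.exists_eq_add_one_of_ne_zero (NeZero.ne N)
  simp only [trace, diag, mprod_apply]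
  rw [← Fintype.sum_prod_type', ← (Fin.snocEquiv fun _ => n).sum_comp]
  refine Fintype.sum_congr _ _ fun y => Finset.prod_congr rfl fun t _ => ?_
  have h := Fin.cons_last_init_apply (Fin.snoc y.2 y.1 : Fin (N + 1) → n) t
  simp only [Fin.snoc_last, Fin.init_snoc] at h
  simp [Fin.snocEquiv, h]

end PathSum

theorem trace_mprod_diagonal_mul {N : ℕ} [NeZero N] {m d : Type*} [Fintype m] [DecidableEq m]
    (A : Fin N → Matrix m m ℝ) (C : Fin N → Matrix d m ℝ) (o : Fin N → d) :
    (mprod fun t => (diagonal (C t (o t)) * A t).map ((↑) : ℝ → ℂ)).trace =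
      ((∑ x : Fin N → m, (∏ t, A t (x t) (x (t - 1))) * ∏ t, C t (o t) (x t) : ℝ) : ℂ) := by
  simp only [trace_mprod, map_apply, diagonal_mul, Complex.ofReal_sum, Complex.ofReal_mul,
    Complex.ofReal_prod, ← Finset.prod_mul_distrib, mul_comm]

section Compression

variable {n m : Type*} [Fintype n] [DecidableEq n] [Fintype m] [DecidableEq m]

theorem mul_mprod_mul {N : ℕ} (S : Fin N → Matrix n n ℂ) (U : Matrix n m ℂ) (V : Matrix m n ℂ)
    (hVU : V * U = 1) (hS : ∀ t, S t * U * V = S t) :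
    V * mprod S * U = mprod fun t => V * S t * U := by
  induction N with
  | zero => simp [mprod, hVU]
  | succ N ih =>
    rw [mprod_castSucc, mprod_castSucc, ← ih _ fun t => hS _]
    conv_lhs => rw [← hS (Fin.last N)]
    simp only [Matrix.mul_assoc]

theorem trace_mprod_eq_trace_mprod_mul_mul {N : ℕ} [NeZero N] (S : Fin N → Matrix n n ℂ)
    (U : Matrix n m ℂ) (V : Matrix m n ℂ) (hVU : V * U = 1) (hS : ∀ t, S t * U * V = S t) :
    (mprod S).trace = (mprod fun t => V * S t * U).trace := by
  obtain ⟨N, rfl⟩ := Nat.exists_eq_add_one_of_ne_zero (NeZero.ne N)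
  have h : mprod S * U * V = mprod S := by
    rw [mprod_succ, Matrix.mul_assoc, Matrix.mul_assoc, ← Matrix.mul_assoc (S 0), hS]
  rw [← mul_mprod_mul S U V hVU hS, Matrix.mul_assoc, trace_mul_comm, h]

end Compression

section Kraus

variable {m n : Type*} [Fintype n] [DecidableEq n] {ι : m → n} {π : n → m}

variable (ι π) in
noncomputable def krausOp (W : Matrix m m ℝ) (w : n) : Matrix n n ℂ :=
  of fun I J => if J = w ∧ ι (π I) = I then ((√(W (π I) (π w)) : ℝ) : ℂ) else 0

noncomputable def krausTransfer (K : n → Matrix n n ℂ) : Matrix (n × n) (n × n) ℂ :=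
  ∑ w, (K w).map (starRingEnd ℂ) ⊗ₖ K w

theorem conjTranspose_krausOp_mul_krausOp [Fintype m] (h : Function.LeftInverse π ι)
    (W : Matrix m m ℝ) (hW : ∀ i j, 0 ≤ W i j) (w : n) :
    (krausOp ι π W w)ᴴ * krausOp ι π W w = single w w ((∑ i, W i (π w) : ℝ) : ℂ) := by
  ext J J'
  by_cases hJ : J = w
  · by_cases hJ' : J' = w
    · subst hJ hJ'
      simp only [krausOp, mul_apply, conjTranspose_apply, of_apply, true_and, single_apply_same,
        Complex.ofReal_sum, ← h.sum_ite_eq]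
      refine Finset.sum_congr rfl fun I _ => ?_
      split_ifs <;> simp [Complex.ofReal_sqrt_mul_self (hW _ _)]
    · simp [krausOp, mul_apply, hJ', Ne.symm hJ']
  · simp [krausOp, mul_apply, hJ, Ne.symm hJ]

theorem krausTransfer_krausOp_apply (W : Matrix m m ℝ) (I J : n × n) :
    krausTransfer (krausOp ι π W) I J =
      if J.1 = J.2 ∧ ι (π I.1) = I.1 ∧ ι (π I.2) = I.2 then
        ((√(W (π I.1) (π J.1)) * √(W (π I.2) (π J.1)) : ℝ) : ℂ) else 0 := by
  simp only [krausTransfer, krausOp, Matrix.sum_apply, kroneckerMap_apply, map_apply, of_apply]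
  rw [Finset.sum_eq_single J.1 (fun w _ hw => by simp [hw.symm]) (by simp)]
  by_cases hJ : J.1 = J.2
  · simp only [hJ, true_and]
    split_ifs <;> simp_all
  · simp [hJ, Ne.symm hJ]

theorem sum_conjTranspose_krausOp_mul_krausOp [Fintype m] (h : Function.LeftInverse π ι)
    {d : Type*} [Fintype d] (W : d → Matrix m m ℝ) (hW0 : ∀ o i j, 0 ≤ W o i j)
    (hW1 : ∀ j, ∑ o, ∑ i, W o i j = 1) :
    ∑ o, ∑ w, (krausOp ι π (W o) w)ᴴ * krausOp ι π (W o) w = 1 := by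
  simp only [conjTranspose_krausOp_mul_krausOp h _ (hW0 _)]
  ext J J'
  simp only [Matrix.sum_apply]
  rw [Finset.sum_comm]
  by_cases hJ : J = J'
  · subst hJ
    simp [single_apply, ← Complex.ofReal_sum, hW1]
  · simp only [single_apply, one_apply_ne hJ]
    refine Finset.sum_eq_zero fun w _ => Finset.sum_eq_zero fun o _ => if_neg ?_
    rintro ⟨rfl, rfl⟩
    exact hJ rfl

variable (ι) in
def diagEmbed : Matrix (n × n) m ℂ :=
  of fun I k => if I = (ι k, ι k) then 1 else 0

theorem mul_diagEmbed_apply (X : Matrix (n × n) (n × n) ℂ) (I : n × n) (k : m) :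
    (X * diagEmbed ι) I k = X I (ι k, ι k) := by
  simp [mul_apply, diagEmbed]

end Kraus

section DiagonalCompression

variable {m n : Type*} [DecidableEq m] [Fintype n] [DecidableEq n] {ι : m → n} {π : n → m}

variable (π) in
def diagRestrict : Matrix m (n × n) ℂ :=
  of fun k J => if J.1 = J.2 ∧ π J.1 = k then 1 else 0

theorem diagRestrict_mul_diagEmbed (h : Function.LeftInverse π ι) :
    diagRestrict π * diagEmbed ι = 1 := by
  ext j k
  simp [diagRestrict, diagEmbed, mul_apply, one_apply, h _, eq_comm]

theorem krausTransfer_mul_diagEmbed_mul_diagRestrict [Fintype m] (h : Function.LeftInverse π ι)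
    (W : Matrix m m ℝ) :
    krausTransfer (krausOp ι π W) * diagEmbed ι * diagRestrict π =
      krausTransfer (krausOp ι π W) := by
  ext I J
  rw [mul_apply]
  simp only [mul_diagEmbed_apply, diagRestrict, of_apply, mul_ite, mul_one, mul_zero, ite_and]
  simp [krausTransfer_krausOp_apply, h _, ite_and]

theorem diagRestrict_mul_krausTransfer_mul_diagEmbed [Fintype m] (h : Function.LeftInverse π ι)
    (W : Matrix m m ℝ) (hW : ∀ i j, 0 ≤ W i j) :
    diagRestrict π * krausTransfer (krausOp ι π W) * diagEmbed ι = W.map (↑) := by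
  ext j k
  rw [Matrix.mul_assoc, mul_apply]
  simp only [mul_diagEmbed_apply, diagRestrict, of_apply, ite_mul, one_mul, zero_mul, ite_and,
    Fintype.sum_prod_type, Finset.sum_ite_eq]
  simp only [krausTransfer_krausOp_apply, h _, and_self, true_and, ← ite_and]
  have hx : ∀ x, (π x = j ∧ ι (π x) = x) ↔ ι j = x := fun x =>
    ⟨fun ⟨hxj, hx⟩ => hxj ▸ hx, fun hx => hx ▸ ⟨h j, congrArg ι (h j)⟩⟩
  simp [hx, h j, Complex.ofReal_sqrt_mul_self (hW _ _)]

end DiagonalCompression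

/-- Every `r`-dimensional circular Hidden Markov Model can be simulated by an
`r²`-dimensional circular Hidden Quantum Markov Model: there are Kraus operators
`K_{t,o,w} ∈ ℂ^{r² × r²}` with `Σ_{o,w} K_{t,o,w}ᴴ K_{t,o,w} = 1` whose c-HQMM joint value
function reproduces the c-HMM joint distribution. -/
theorem chmm_to_chqmm {N r d : ℕ} [NeZero N]
    (A : Fin N → Matrix (Fin r) (Fin r) ℝ)
    (hA0 : ∀ (t : Fin N) (i j : Fin r), 0 ≤ A t i j)
    (hA1 : ∀ (t : Fin N) (j : Fin r), ∑ i : Fin r, A t i j = 1)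
    (C : Fin N → Matrix (Fin d) (Fin r) ℝ)
    (hC0 : ∀ (t : Fin N) (o : Fin d) (s : Fin r), 0 ≤ C t o s)
    (hC1 : ∀ (t : Fin N) (s : Fin r), ∑ o : Fin d, C t o s = 1)
    (p : (Fin N → Fin d) → ℝ)
    (hp : ∀ o : Fin N → Fin d,
      p o = ∑ x : Fin N → Fin r,
        (∏ t : Fin N, A t (x t) (x (t - 1))) * ∏ t : Fin N, C t (o t) (x t)) :
    ∃ (μ : Fin N → ℕ)
      (K : (t : Fin N) → Fin d → Fin (μ t) → Matrix (Fin (r * r)) (Fin (r * r)) ℂ),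
      (∀ t : Fin N,
        ∑ o : Fin d, ∑ w : Fin (μ t), (K t o w)ᴴ * K t o w = 1) ∧
      ∀ o : Fin N → Fin d,
        (p o : ℂ) =
          (mprod fun t : Fin N =>
            ∑ w : Fin (μ t),
              (K t (o t) w).map (starRingEnd ℂ) ⊗ₖ K t (o t) w).trace := by
  let ι : Fin r → Fin (r * r) := fun i => finProdFinEquiv (i, i)
  let π : Fin (r * r) → Fin r := fun w => (finProdFinEquiv.symm w).1
  have hπι : Function.LeftInverse π ι := fun i =>
    congrArg Prod.fst (finProdFinEquiv.symm_apply_apply (i, i))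
  let W t o := diagonal (C t o) * A t
  have hW0 t o i j : 0 ≤ W t o i j := by
    simpa [W, diagonal_mul] using mul_nonneg (hC0 t o i) (hA0 t i j)
  have hW1 t j : ∑ o, ∑ i, W t o i j = 1 := by
    simp [W, diagonal_mul, Finset.sum_comm (γ := Fin d), ← Finset.sum_mul, hC1, hA1]
  refine ⟨fun _ => r * r, fun t o => krausOp ι π (W t o),
    fun t => sum_conjTranspose_krausOp_mul_krausOp hπι (W t) (hW0 t) (hW1 t), fun o => ?_⟩
  calc (p o : ℂ) = (mprod fun t => (W t (o t)).map (↑)).trace := by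
        rw [hp, trace_mprod_diagonal_mul]
    _ = (mprod fun t =>
          diagRestrict π * krausTransfer (krausOp ι π (W t (o t))) * diagEmbed ι).trace := by
        simp only [diagRestrict_mul_krausTransfer_mul_diagEmbed hπι _ (hW0 _ _)]
    _ = (mprod fun t => krausTransfer (krausOp ι π (W t (o t)))).trace :=
        (trace_mprod_eq_trace_mprod_mul_mul _ _ _ (diagRestrict_mul_diagEmbed hπι)
          fun t => krausTransfer_mul_diagEmbed_mul_diagRestrict hπι _).symm
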